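/- arXiv:0910.0610 — 2 statements merged into one kernel-verified Lean document; each statement's English description precedes it below -/
import Mathlib

section
/- Let f : X → ℝ ∪ {∞} be closed convex and β-strongly convex w.r.t. a norm ‖·‖ on a real inner product space X, with f*(0) = 0. Let X_bound > 0 and f_max > 0, let 𝒳 = {x ∈ X : ‖x‖* ≤ X_bound} and 𝒲 = {w ∈ X : f(w) ≤ f_max}, and consider the class of linear functions ℱ = {x ↦ ⟨w,x⟩ : w ∈ 𝒲}. Then for any dataset T = (x_1, …, x_n) with each x_i ∈ 𝒳, the Rademacher complexity satisfies R_T(ℱ) ≤ X_bound · √(2 f_max/(β n)). -/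
open scoped BigOperators
open RealInnerProductSpace

/-- `N` is a norm on the real vector space `V`. -/
def IsNormOn {V : Type*} [AddCommGroup V] [Module ℝ V] (N : V → ℝ) : Prop :=
  (∀ x, 0 ≤ N x) ∧ (∀ x, N x = 0 → x = 0) ∧
    (∀ (c : ℝ) (x : V), N (c • x) = |c| * N x) ∧ ∀ x y, N (x + y) ≤ N x + N y

variable {X : Type*} [NormedAddCommGroup X] [InnerProductSpace ℝ X]

/-- The dual norm of `N` with respect to the inner product. -/
noncomputable def dualNorm (N : X → ℝ) (y : X) : ℝ :=
  sSup {r : ℝ | ∃ x : X, N x ≤ 1 ∧ r = ⟪x, y⟫}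

/-- The Fenchel conjugate `f⋆(y) = sup_x (⟪x, y⟫ - f x)`. -/
noncomputable def fenchelConj (f : X → EReal) (y : X) : EReal :=
  ⨆ x : X, ((⟪x, y⟫ : ℝ) : EReal) - f x

/-- `f` is convex (with values in `ℝ ∪ {∞}`). -/
def ERealConvexOn (f : X → EReal) : Prop :=
  ∀ (x y : X) (α : ℝ), 0 ≤ α → α ≤ 1 →
    f (α • x + (1 - α) • y) ≤ (α : EReal) * f x + ((1 - α : ℝ) : EReal) * f y

/-- `f` is `β`-strongly convex w.r.t. the norm `N`. -/
def EStrongConvexOn (N : X → ℝ) (β : ℝ) (f : X → EReal) : Prop :=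
  ∀ x ∈ intrinsicInterior ℝ {z : X | f z ≠ ⊤}, ∀ y ∈ intrinsicInterior ℝ {z : X | f z ≠ ⊤},
    ∀ α : ℝ, 0 < α → α < 1 →
      f (α • x + (1 - α) • y) ≤
        (α : EReal) * f x + ((1 - α : ℝ) : EReal) * f y
          - ((β / 2 * α * (1 - α) * N (x - y) ^ 2 : ℝ) : EReal)

/-!
Strong convexity of `f` on the relative interior of its domain makes `f⋆` smooth for the dual
norm: `f⋆(u + v) + f⋆(u - v) ≤ 2 f⋆(u) + c² / β` whenever `⟪·, v⟫ ≤ c N(·)`, by evaluating at the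
midpoint of two near-maximisers (the supremum defining `f⋆` may be taken over the relative
interior, since `⟪·, y⟫ - f` is concave along segments). Peeling off one Rademacher sign at a
time gives `E f⋆(t ∑ εᵢ xᵢ) ≤ n t² Xb² / (2β)`, and the Fenchel–Young inequality
`⟪w, y⟫ ≤ f w + f⋆ y` bounds the complexity by `fmax / (n t) + t Xb² / (2β)` for every `t > 0`;
it remains to optimise in `t`.
-/

def Renormed (V : Type*) := V

instance {V : Type*} [AddCommGroup V] : AddCommGroup (Renormed V) :=
  inferInstanceAs (AddCommGroup V)
instance {V : Type*} [AddCommGroup V] [Module ℝ V] : Module ℝ (Renormed V) :=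
  inferInstanceAs (Module ℝ V)

theorem IsNormOn.exists_norm_le_mul {V : Type*} [NormedAddCommGroup V] [NormedSpace ℝ V]
    [FiniteDimensional ℝ V] {N : V → ℝ} (hN : IsNormOn N) : ∃ C, ∀ z, ‖z‖ ≤ C * N z := by
  obtain ⟨-, hdef, hsmul, htri⟩ := hN
  have hzero : N 0 = 0 := by simpa using hsmul 0 0
  have hneg (z : V) : N (-z) = N z := by simpa using hsmul (-1) z
  let _ : NormedAddCommGroup (Renormed V) := AddGroupNorm.toNormedAddCommGroup
    { toFun := N
      map_zero' := hzero
      add_le' := htri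
      neg' := hneg
      eq_zero_of_map_eq_zero' := hdef }
  let _ : NormedSpace ℝ (Renormed V) := ⟨fun c z => (hsmul c z).le⟩
  have _ : FiniteDimensional ℝ (Renormed V) := inferInstanceAs (FiniteDimensional ℝ V)
  let id : Renormed V →L[ℝ] V := LinearMap.toContinuousLinearMap LinearMap.id
  exact ⟨‖id‖, id.le_opNorm⟩

theorem inner_le_mul_dualNorm [FiniteDimensional ℝ X] {N : X → ℝ} (hN : IsNormOn N) (d y : X) :
    ⟪d, y⟫ ≤ N d * dualNorm N y := by
  obtain ⟨C, hC⟩ := hN.exists_norm_le_mul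
  have hbdd : BddAbove {r : ℝ | ∃ x : X, N x ≤ 1 ∧ r = ⟪x, y⟫} := by
    refine ⟨max C 0 * ‖y‖, ?_⟩
    rintro r ⟨z, hz, rfl⟩
    calc ⟪z, y⟫ ≤ ‖z‖ * ‖y‖ := real_inner_le_norm z y
      _ ≤ max C 0 * ‖y‖ := by
        gcongr
        nlinarith [hC z, le_max_left C 0, le_max_right C 0, hN.1 z]
  rcases (hN.1 d).eq_or_lt with hd | hd
  · rw [← hd, zero_mul, hN.2.1 d hd.symm, inner_zero_left]
  · have hunit : N ((N d)⁻¹ • d) ≤ 1 := by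
      rw [hN.2.2.1, abs_of_pos (inv_pos.mpr hd), inv_mul_cancel₀ hd.ne']
    calc ⟪d, y⟫ = N d * ⟪(N d)⁻¹ • d, y⟫ := by
          rw [real_inner_smul_left, mul_inv_cancel_left₀ hd.ne']
      _ ≤ N d * dualNorm N y := by
        gcongr
        exact le_csSup hbdd ⟨_, hunit, rfl⟩

theorem Convex.combo_intrinsicInterior_self_mem_intrinsicInterior {V : Type*}
    [NormedAddCommGroup V] [NormedSpace ℝ V] {s : Set V} (hs : Convex ℝ s) {x y : V}
    (hx : x ∈ intrinsicInterior ℝ s) (hy : y ∈ s) {a b : ℝ} (ha : 0 < a) (hb : 0 ≤ b)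
    (hab : a + b = 1) : a • x + b • y ∈ intrinsicInterior ℝ s := by
  obtain ⟨x', hx', rfl⟩ := hx
  let y' : affineSpan ℝ s := ⟨y, subset_affineSpan ℝ s hy⟩
  have : Nonempty (affineSpan ℝ s) := ⟨y'⟩
  let H := AffineMap.homothety y' a
  have hH (p : affineSpan ℝ s) : (H p : V) = a • (p : V) + b • y := by
    simp only [H, AffineMap.homothety_apply, AffineSubspace.coe_vadd, vadd_eq_add,
      Submodule.coe_smul, AffineSubspace.coe_vsub, vsub_eq_sub]
    obtain rfl : b = 1 - a := by linarith
    module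
  have hmaps : Set.MapsTo H ((↑) ⁻¹' s) ((↑) ⁻¹' s) := fun p hp => by
    simpa only [Set.mem_preimage, hH] using hs hp hy ha.le hb hab
  refine ⟨H x', ?_, hH x'⟩
  exact interior_mono hmaps.image_subset
    ((AffineMap.homothety_isOpenMap y' a ha.ne').image_interior_subset _ ⟨x', hx', rfl⟩)

theorem sum_signs_le {E : Type*} [AddCommGroup E] [Module ℝ E] (G : E → ℝ) (K : ℝ) {n : ℕ}
    (v : Fin n → E) (hG : ∀ u i, G (u + v i) + G (u - v i) ≤ 2 * G u + K) (u : E) :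
    ∑ s : Fin n → Bool, G (u + ∑ i, (if s i then (1 : ℝ) else -1) • v i) ≤
      2 ^ n * (G u + n * K / 2) := by
  induction n generalizing u with
  | zero => simp
  | succ n ih =>
    have ih' (w : E) := ih (v ∘ Fin.succ) (fun u i => hG u i.succ) w
    rw [← (Fin.consEquiv fun _ => Bool).sum_comp, Fintype.sum_prod_type, Fintype.sum_bool]
    simp only [Fin.consEquiv_apply, Fin.sum_univ_succ, Fin.cons_zero, Fin.cons_succ, if_true,
      Bool.false_eq_true, if_false, one_smul, neg_one_smul, ← add_assoc, ← sub_eq_add_neg]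
    have h1 := ih' (u + v 0)
    have h2 := ih' (u - v 0)
    have h3 := mul_le_mul_of_nonneg_left (hG u 0) (by positivity : (0 : ℝ) ≤ 2 ^ n)
    simp only [Function.comp_apply] at h1 h2
    push_cast
    rw [pow_succ]
    linarith

open Filter Topology

theorem EReal.toReal_le_of_le_coe {e : EReal} {r : ℝ} (he : e ≠ ⊥) (h : e ≤ r) : e.toReal ≤ r := by
  simpa using EReal.toReal_le_toReal h he (EReal.coe_ne_top r)

theorem ERealConvexOn.convexOn_toReal {f : X → EReal} (hconv : ERealConvexOn f)
    (hfbot : ∀ x, f x ≠ ⊥) : ConvexOn ℝ {z | f z ≠ ⊤} fun z => (f z).toReal := by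
  have key : ∀ x ∈ {z | f z ≠ ⊤}, ∀ y ∈ {z | f z ≠ ⊤}, ∀ a b : ℝ, 0 ≤ a → 0 ≤ b → a + b = 1 →
      f (a • x + b • y) ≤ ((a * (f x).toReal + b * (f y).toReal : ℝ) : EReal) := by
    intro x hx y hy a b ha hb hab
    obtain rfl : b = 1 - a := by linarith
    have h := hconv x y a ha (by linarith)
    rw [← EReal.coe_toReal hx (hfbot x), ← EReal.coe_toReal hy (hfbot y)] at h
    exact_mod_cast h
  refine ⟨fun x hx y hy a b ha hb hab => ?_, fun x hx y hy a b ha hb hab => ?_⟩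
  · exact ne_top_of_le_ne_top (EReal.coe_ne_top _) (key x hx y hy a b ha hb hab)
  · exact EReal.toReal_le_of_le_coe (hfbot _) (key x hx y hy a b ha hb hab)

theorem inner_sub_le_fenchelConj {f : X → EReal} {x : X} {r : ℝ} (h : f x ≤ r) (y : X) :
    ((⟪x, y⟫ - r : ℝ) : EReal) ≤ fenchelConj f y :=
  calc ((⟪x, y⟫ - r : ℝ) : EReal) = ((⟪x, y⟫ : ℝ) : EReal) - r := EReal.coe_sub _ _
    _ ≤ ((⟪x, y⟫ : ℝ) : EReal) - f x := EReal.sub_le_sub le_rfl h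
    _ ≤ fenchelConj f y := le_iSup (fun z : X => ((⟪z, y⟫ : ℝ) : EReal) - f z) x

theorem fenchelConj_le_of_forall_intrinsicInterior {f : X → EReal} (hfbot : ∀ x, f x ≠ ⊥)
    (hconv : ERealConvexOn f) {x₀ : X} (hx₀ : x₀ ∈ intrinsicInterior ℝ {z | f z ≠ ⊤})
    {y : X} {r : ℝ} (hr : ∀ a ∈ intrinsicInterior ℝ {z | f z ≠ ⊤}, ⟪a, y⟫ - (f a).toReal ≤ r) :
    fenchelConj f y ≤ r := by
  refine iSup_le fun z => ?_
  by_cases hz : f z = ⊤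
  · simp [hz]
  rw [← EReal.coe_toReal hz (hfbot z), ← EReal.coe_sub, EReal.coe_le_coe_iff]
  set A := ⟪x₀, y⟫ - (f x₀).toReal
  set B := ⟪z, y⟫ - (f z).toReal
  have hF := hconv.convexOn_toReal hfbot
  have hseg : ∀ t ∈ Set.Ioo (0 : ℝ) 1, (1 - t) * A + t * B ≤ r := by
    rintro t ⟨ht₀, ht₁⟩
    have hmem := hF.1.combo_intrinsicInterior_self_mem_intrinsicInterior hx₀ hz
      (sub_pos.2 ht₁) ht₀.le (sub_add_cancel 1 t)
    have hle := hF.2 (intrinsicInterior_subset hx₀) hz (sub_pos.2 ht₁).le ht₀.le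
      (sub_add_cancel 1 t)
    have := hr _ hmem
    simp only [inner_add_left, real_inner_smul_left, smul_eq_mul] at hle this
    linarith
  have hlim : Tendsto (fun t : ℝ => (1 - t) * A + t * B) (𝓝[<] 1) (𝓝 B) :=
    ((by fun_prop : Continuous fun t : ℝ => (1 - t) * A + t * B).tendsto' 1 B
      (by ring)).mono_left nhdsWithin_le_nhds
  exact le_of_tendsto hlim (eventually_of_mem (Ioo_mem_nhdsLT zero_lt_one) hseg)

theorem EStrongConvexOn.midpoint_le {N : X → ℝ} {β : ℝ} {f : X → EReal}
    (hsc : EStrongConvexOn N β f) (hfbot : ∀ x, f x ≠ ⊥) {a b : X}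
    (ha : a ∈ intrinsicInterior ℝ {z | f z ≠ ⊤}) (hb : b ∈ intrinsicInterior ℝ {z | f z ≠ ⊤}) :
    f ((1 / 2 : ℝ) • a + (1 / 2 : ℝ) • b) ≤
      (((f a).toReal + (f b).toReal) / 2 - β / 8 * N (a - b) ^ 2 : ℝ) := by
  have h := hsc a ha b hb (1 / 2) (by norm_num) (by norm_num)
  rw [← EReal.coe_toReal (intrinsicInterior_subset ha) (hfbot a),
    ← EReal.coe_toReal (intrinsicInterior_subset hb) (hfbot b)] at h
  norm_num at h
  convert h using 1
  norm_cast
  ring_nf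

theorem inner_add_add_inner_sub_le {N : X → ℝ} {β : ℝ} (hβ : 0 < β) {f : X → EReal}
    (hfbot : ∀ x, f x ≠ ⊥) (hsc : EStrongConvexOn N β f) {u v : X} {U c : ℝ}
    (hu : fenchelConj f u ≤ U) (hc : ∀ d, ⟪d, v⟫ ≤ N d * c) {a b : X}
    (ha : a ∈ intrinsicInterior ℝ {z | f z ≠ ⊤}) (hb : b ∈ intrinsicInterior ℝ {z | f z ≠ ⊤}) :
    (⟪a, u + v⟫ - (f a).toReal) + (⟪b, u - v⟫ - (f b).toReal) ≤ 2 * U + c ^ 2 / β := by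
  have hmid : ⟪(1 / 2 : ℝ) • a + (1 / 2 : ℝ) • b, u⟫ -
      (((f a).toReal + (f b).toReal) / 2 - β / 8 * N (a - b) ^ 2) ≤ U :=
    EReal.coe_le_coe_iff.1 ((inner_sub_le_fenchelConj (hsc.midpoint_le hfbot ha hb) u).trans hu)
  have hdiff : ⟪a - b, v⟫ ≤ N (a - b) * c := hc (a - b)
  have hamgm : N (a - b) * c ≤ β / 4 * N (a - b) ^ 2 + c ^ 2 / β := by
    have hsq : β / 4 * N (a - b) ^ 2 + c ^ 2 / β - N (a - b) * c =
        (β * N (a - b) - 2 * c) ^ 2 / (4 * β) := by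
      field_simp
      ring
    have : 0 ≤ (β * N (a - b) - 2 * c) ^ 2 / (4 * β) := by positivity
    linarith
  simp only [inner_add_left, inner_add_right, inner_sub_left, inner_sub_right,
    real_inner_smul_left] at hmid hdiff ⊢
  linarith

theorem fenchelConj_ne_bot {f : X → EReal} {x₀ : X} (hx₀ : f x₀ ≠ ⊤) (y : X) :
    fenchelConj f y ≠ ⊥ :=
  ne_bot_of_le_ne_bot (EReal.coe_ne_bot _) (inner_sub_le_fenchelConj (EReal.le_coe_toReal hx₀) y)

theorem toReal_fenchelConj_le {f : X → EReal} (hfbot : ∀ x, f x ≠ ⊥)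
    (hconv : ERealConvexOn f) {x₀ : X} (hx₀ : x₀ ∈ intrinsicInterior ℝ {z | f z ≠ ⊤})
    {y : X} {r : ℝ} (hr : ∀ a ∈ intrinsicInterior ℝ {z | f z ≠ ⊤}, ⟪a, y⟫ - (f a).toReal ≤ r) :
    (fenchelConj f y).toReal ≤ r :=
  EReal.toReal_le_of_le_coe (fenchelConj_ne_bot (intrinsicInterior_subset hx₀) y)
    (fenchelConj_le_of_forall_intrinsicInterior hfbot hconv hx₀ hr)

theorem inner_sub_le_toReal_fenchelConj {f : X → EReal} {x y : X} (hx : f x ≠ ⊤)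
    (hy : fenchelConj f y ≠ ⊤) : ⟪x, y⟫ - (f x).toReal ≤ (fenchelConj f y).toReal := by
  rw [← EReal.coe_le_coe_iff, EReal.coe_toReal hy (fenchelConj_ne_bot hx y)]
  exact inner_sub_le_fenchelConj (EReal.le_coe_toReal hx) y

theorem fenchelConj_ne_top [FiniteDimensional ℝ X] {N : X → ℝ} (hN : IsNormOn N) {β : ℝ}
    (hβ : 0 < β) {f : X → EReal} (hfbot : ∀ x, f x ≠ ⊥) (hconv : ERealConvexOn f)
    (hsc : EStrongConvexOn N β f) (hstar0 : fenchelConj f 0 = 0) {x₀ : X}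
    (hx₀ : x₀ ∈ intrinsicInterior ℝ {z | f z ≠ ⊤}) (y : X) : fenchelConj f y ≠ ⊤ := by
  refine ne_top_of_le_ne_top
    (EReal.coe_ne_top (dualNorm N y ^ 2 / β - (⟪x₀, -y⟫ - (f x₀).toReal)))
    (fenchelConj_le_of_forall_intrinsicInterior hfbot hconv hx₀ fun a ha => ?_)
  have := inner_add_add_inner_sub_le hβ hfbot hsc (u := 0) (U := 0) (by simp [hstar0])
    (inner_le_mul_dualNorm hN · y) ha hx₀
  rw [zero_add, zero_sub] at this
  linarith

theorem toReal_fenchelConj_add_add_sub_le {N : X → ℝ} {β : ℝ} (hβ : 0 < β) {f : X → EReal}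
    (hfbot : ∀ x, f x ≠ ⊥) (hconv : ERealConvexOn f) (hsc : EStrongConvexOn N β f) {x₀ : X}
    (hx₀ : x₀ ∈ intrinsicInterior ℝ {z | f z ≠ ⊤}) (hfin : ∀ y, fenchelConj f y ≠ ⊤)
    {v : X} {c : ℝ} (hc : ∀ d, ⟪d, v⟫ ≤ N d * c) (u : X) :
    (fenchelConj f (u + v)).toReal + (fenchelConj f (u - v)).toReal ≤
      2 * (fenchelConj f u).toReal + c ^ 2 / β := by
  -- take the supremum over `a`, then over `b`
  suffices ∀ b ∈ intrinsicInterior ℝ {z | f z ≠ ⊤}, ⟪b, u - v⟫ - (f b).toReal ≤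
      2 * (fenchelConj f u).toReal + c ^ 2 / β - (fenchelConj f (u + v)).toReal by
    linarith [toReal_fenchelConj_le hfbot hconv hx₀ this]
  intro b hb
  have := toReal_fenchelConj_le hfbot hconv hx₀ (y := u + v) fun a ha => le_sub_iff_add_le.2 <|
    inner_add_add_inner_sub_le hβ hfbot hsc (EReal.le_coe_toReal (hfin u)) hc ha hb
  linarith

theorem exists_lt_of_neg_lt_fenchelConj_zero {f : X → EReal} {m : ℝ}
    (h : ((-m : ℝ) : EReal) < fenchelConj f 0) : ∃ w, f w < m := by
  obtain ⟨w, hw⟩ := lt_iSup_iff.1 h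
  refine ⟨w, ?_⟩
  rwa [inner_zero_right, EReal.coe_zero, zero_sub, EReal.lt_neg_comm, EReal.coe_neg,
    neg_neg] at hw

theorem sSup_signed_mean_inner_le {f : X → EReal} (hfbot : ∀ x, f x ≠ ⊥) {fmax : ℝ}
    (hW : ∃ w, f w ≤ fmax) {n : ℕ} (hn : 0 < n) (x : Fin n → X) (s : Fin n → Bool) {t : ℝ}
    (ht : 0 < t) (hfin : fenchelConj f (∑ i, (if s i then (1 : ℝ) else -1) • t • x i) ≠ ⊤) :
    sSup {r : ℝ | ∃ w : X, f w ≤ (fmax : EReal) ∧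
        r = (1 / n : ℝ) * ∑ i, (if s i then (1 : ℝ) else -1) * ⟪w, x i⟫} ≤
      (fmax + (fenchelConj f (∑ i, (if s i then (1 : ℝ) else -1) • t • x i)).toReal) /
        (n * t) := by
  obtain ⟨w₀, hw₀⟩ := hW
  refine csSup_le ⟨_, w₀, hw₀, rfl⟩ ?_
  rintro r ⟨w, hw, rfl⟩
  have hFY := inner_sub_le_toReal_fenchelConj (ne_top_of_le_ne_top (EReal.coe_ne_top _) hw) hfin
  have hfw := EReal.toReal_le_of_le_coe (hfbot w) hw
  have hscale : ((1 / n : ℝ) * ∑ i, (if s i then (1 : ℝ) else -1) * ⟪w, x i⟫) * (n * t) =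
      ⟪w, ∑ i, (if s i then (1 : ℝ) else -1) • t • x i⟫ := by
    simp only [inner_sum, real_inner_smul_right, Finset.mul_sum, Finset.sum_mul]
    refine Finset.sum_congr rfl fun i _ => ?_
    field_simp
  rw [le_div_iff₀ (by positivity), hscale]
  linarith

theorem rademacher_le [FiniteDimensional ℝ X] {N : X → ℝ} (hN : IsNormOn N) {β : ℝ}
    (hβ : 0 < β) {f : X → EReal} (hfbot : ∀ x, f x ≠ ⊥) (hproper : ∃ x, f x ≠ ⊤)
    (hconv : ERealConvexOn f) (hsc : EStrongConvexOn N β f) (hstar0 : fenchelConj f 0 = 0)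
    {Xb fmax : ℝ} (hfmax : 0 < fmax) {n : ℕ} (hn : 0 < n) {x : Fin n → X}
    (hx : ∀ i, dualNorm N (x i) ≤ Xb) {t : ℝ} (ht : 0 < t) :
    (1 / 2 ^ n : ℝ) * ∑ s : Fin n → Bool,
        sSup {r : ℝ | ∃ w : X, f w ≤ (fmax : EReal) ∧
          r = (1 / n : ℝ) * ∑ i, (if s i then (1 : ℝ) else -1) * ⟪w, x i⟫} ≤
      fmax / (n * t) + t * Xb ^ 2 / (2 * β) := by
  obtain ⟨x₀, hx₀⟩ := Set.Nonempty.intrinsicInterior (hconv.convexOn_toReal hfbot).1 hproper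
  have hfin := fenchelConj_ne_top hN hβ hfbot hconv hsc hstar0 hx₀
  set G : X → ℝ := fun y => (fenchelConj f y).toReal
  set y : (Fin n → Bool) → X := fun s => ∑ i, (if s i then (1 : ℝ) else -1) • t • x i
  obtain ⟨w₀, hw₀⟩ : ∃ w, f w < fmax :=
    exists_lt_of_neg_lt_fenchelConj_zero (by rw [hstar0]; exact_mod_cast neg_neg_of_pos hfmax)
  have hsmooth (u : X) (i : Fin n) :
      G (u + t • x i) + G (u - t • x i) ≤ 2 * G u + (t * Xb) ^ 2 / β :=
    toReal_fenchelConj_add_add_sub_le hβ hfbot hconv hsc hx₀ hfin (fun d => by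
      rw [real_inner_smul_right]
      have := mul_le_mul_of_nonneg_left (inner_le_mul_dualNorm hN d (x i)) ht.le
      have := mul_le_mul_of_nonneg_left (hx i) (mul_nonneg ht.le (hN.1 d))
      linarith) u
  have hsigns : ∑ s, G (y s) ≤ 2 ^ n * (n * ((t * Xb) ^ 2 / β) / 2) := by
    simpa only [zero_add, G, hstar0, EReal.toReal_zero] using
      sum_signs_le G _ (fun i => t • x i) hsmooth 0
  calc _ ≤ (1 / 2 ^ n : ℝ) * ∑ s : Fin n → Bool, (fmax + G (y s)) / (n * t) := by
        gcongr with s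
        exact sSup_signed_mean_inner_le hfbot ⟨w₀, hw₀.le⟩ hn x s ht (hfin _)
    _ = fmax / (n * t) + (∑ s, G (y s)) / (2 ^ n * n * t) := by
        rw [← Finset.sum_div, Finset.sum_add_distrib, Finset.sum_const, Finset.card_univ,
          Fintype.card_fun, Fintype.card_bool, Fintype.card_fin, nsmul_eq_mul]
        push_cast
        field_simp
    _ ≤ fmax / (n * t) + (2 ^ n * (n * ((t * Xb) ^ 2 / β) / 2)) / (2 ^ n * n * t) := by
        gcongr
    _ = fmax / (n * t) + t * Xb ^ 2 / (2 * β) := by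
        field_simp

theorem stmt3_general [FiniteDimensional ℝ X]
    (N : X → ℝ) (hN : IsNormOn N) (β : ℝ) (hβ : 0 < β)
    (f : X → EReal) (hfbot : ∀ x, f x ≠ ⊥) (hproper : ∃ x, f x ≠ ⊤)
    (hconv : ERealConvexOn f)
    (hsc : EStrongConvexOn N β f) (hstar0 : fenchelConj f 0 = 0)
    (Xb fmax : ℝ) (hXb : 0 < Xb) (hfmax : 0 < fmax)
    (n : ℕ) (hn : 0 < n) (x : Fin n → X) (hx : ∀ i, dualNorm N (x i) ≤ Xb) :
    (1 / 2 ^ n : ℝ) * ∑ s : Fin n → Bool,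
        sSup {r : ℝ | ∃ w : X, f w ≤ (fmax : EReal) ∧
          r = (1 / n : ℝ) * ∑ i, (if s i then (1 : ℝ) else -1) * ⟪w, x i⟫} ≤
      Xb * Real.sqrt (2 * fmax / (β * n)) := by
  set q := Real.sqrt (2 * fmax / (β * n))
  have hq : 0 < q := Real.sqrt_pos.2 (by positivity)
  have hq2 : q ^ 2 = 2 * fmax / (β * n) := Real.sq_sqrt (by positivity)
  -- `t = β q / Xb` minimises `fmax / (n t) + t Xb² / (2 β)`
  calc _ ≤ fmax / (n * (β * q / Xb)) + β * q / Xb * Xb ^ 2 / (2 * β) :=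
        rademacher_le hN hβ hfbot hproper hconv hsc hstar0 hfmax hn hx (by positivity)
    _ = Xb * q := by
        field_simp
        rw [hq2]
        field_simp
        ring

/-- Rademacher complexity bound for linear classes (Theorem 2.6 of the paper): if `f` is
`β`-strongly convex w.r.t. `N`, closed convex with `f⋆(0) = 0`, the points `x i` satisfy
`dualNorm N (x i) ≤ Xb`, and `𝒲 = {w : f w ≤ fmax}`, then the Rademacher complexity
`E_ε [sup_{w ∈ 𝒲} (1/n) ∑ i ε_i ⟪w, x i⟫]` (expectation over uniform signs, written as a
normalized sum over all sign patterns `s : Fin n → Bool`) is at most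
`Xb √(2 fmax/(β n))`. -/
theorem stmt3 [FiniteDimensional ℝ X]
    (N : X → ℝ) (hN : IsNormOn N) (β : ℝ) (hβ : 0 < β)
    (f : X → EReal) (hfbot : ∀ x, f x ≠ ⊥) (hproper : ∃ x, f x ≠ ⊤)
    (hclosed : LowerSemicontinuous f) (hconv : ERealConvexOn f)
    (hsc : EStrongConvexOn N β f) (hstar0 : fenchelConj f 0 = 0)
    (Xb fmax : ℝ) (hXb : 0 < Xb) (hfmax : 0 < fmax)
    (n : ℕ) (hn : 0 < n) (x : Fin n → X) (hx : ∀ i, dualNorm N (x i) ≤ Xb) :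
    (1 / 2 ^ n : ℝ) * ∑ s : Fin n → Bool,
        sSup {r : ℝ | ∃ w : X, f w ≤ (fmax : EReal) ∧
          r = (1 / n : ℝ) * ∑ i, (if s i then (1 : ℝ) else -1) * ⟪w, x i⟫} ≤
      Xb * Real.sqrt (2 * fmax / (β * n)) :=
  stmt3_general N hN β hβ f hfbot hproper hconv hsc hstar0 Xb fmax hXb hfmax n hn x hx
end

section
/- Let Ψ be an absolutely symmetric norm on ℝ^m and Φ an absolutely symmetric norm on ℝ^n such that the function (Φ²∘√)(x) := Φ(√x_1, …, √x_n)², defined for x in the nonnegative orthant and extended by (Φ²∘√)(x) = Φ(√|x_1|,…,√|x_n|)², is a norm on ℝ^n. Suppose Ψ² is σ₁-smooth w.r.t. Ψ and Φ² is σ₂-smooth w.r.t. Φ, in the sense that for all vectors x, y and all α ∈ [0,1], Ψ²(αx + (1−α)y) ≥ αΨ²(x) + (1−α)Ψ²(y) − (σ₁/2)α(1−α)Ψ²(x−y), and similarly for Φ. Define the group norm ‖X‖_{Ψ,Φ} := Φ(Ψ(X¹), …, Ψ(Xⁿ)) for X ∈ ℝ^{m×n} with columns X¹, …, Xⁿ.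 Then ‖·‖²_{Ψ,Φ} is (σ₁+σ₂)-smooth w.r.t. ‖·‖_{Ψ,Φ}: for all X, Y ∈ ℝ^{m×n} and α ∈ [0,1], ‖αX + (1−α)Y‖²_{Ψ,Φ} ≥ α‖X‖²_{Ψ,Φ} + (1−α)‖Y‖²_{Ψ,Φ} − ((σ₁+σ₂)/2)α(1−α)‖X−Y‖²_{Ψ,Φ}. -/
open scoped BigOperators

/-- `Φ` is an absolutely symmetric norm: a norm invariant under arbitrary permutations and
sign changes of the components of its argument. -/
def AbsSymmNorm {n : ℕ} (Φ : (Fin n → ℝ) → ℝ) : Prop :=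
  IsNormOn Φ ∧ ∀ (σ : Equiv.Perm (Fin n)) (x : Fin n → ℝ), Φ (fun i => |x (σ i)|) = Φ x

/-!
Write `u, v, d, w` for the vectors of column norms `Ψ(Xʲ)` of `A`, `B`, `A - B` and
`αA + (1-α)B`. Smoothness of `Ψ²` gives, column by column,
`α uⱼ² + (1-α) vⱼ² ≤ wⱼ² + (σ₁/2) α(1-α) dⱼ²`. Since `Φ²∘√` is a norm that is monotone in the
absolute values of the coordinates, this entrywise bound on squares passes to
`Φ(√(αu² + (1-α)v²))² ≤ Φ(w)² + (σ₁/2) α(1-α) Φ(d)²`, and the left side dominates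
`Φ(αu + (1-α)v)²` by the power-mean inequality. Smoothness of `Φ²` applied to `u, v`, together
with `|uⱼ - vⱼ| ≤ dⱼ`, supplies the remaining `σ₂` term.
-/

open Function

namespace IsNormOn

variable {V : Type*} [AddCommGroup V] [Module ℝ V] {N : V → ℝ}

theorem map_zero (hN : IsNormOn N) : N 0 = 0 := by
  simpa using hN.2.2.1 0 0

theorem map_neg (hN : IsNormOn N) (x : V) : N (-x) = N x := by
  simpa using hN.2.2.1 (-1) x

theorem map_smul_of_nonneg (hN : IsNormOn N) {c : ℝ} (hc : 0 ≤ c) (x : V) :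
    N (c • x) = c * N x := by
  rw [hN.2.2.1, abs_of_nonneg hc]

theorem map_smul_add_smul_le (hN : IsNormOn N) {a b : ℝ} (ha : 0 ≤ a) (hb : 0 ≤ b) (x y : V) :
    N (a • x + b • y) ≤ a * N x + b * N y := by
  simpa only [hN.map_smul_of_nonneg ha, hN.map_smul_of_nonneg hb] using hN.2.2.2 (a • x) (b • y)

theorem abs_map_sub_map_le (hN : IsNormOn N) (x y : V) : |N x - N y| ≤ N (x - y) := by
  have hx := hN.2.2.2 (x - y) y
  have hy := hN.2.2.2 (y - x) x
  rw [sub_add_cancel] at hx hy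
  rw [← neg_sub, hN.map_neg] at hy
  exact abs_sub_le_iff.mpr ⟨by linarith, by linarith⟩

section Monotone

variable {ι : Type*} {Φ : (ι → ℝ) → ℝ}

theorem map_update_le [DecidableEq ι] (hΦ : IsNormOn Φ)
    (habs : ∀ x, Φ (fun i => |x i|) = Φ x) (z : ι → ℝ) (i : ι) {c : ℝ} (hc : |c| ≤ |z i|) :
    Φ (update z i c) ≤ Φ z := by
  have hflip : Φ (update z i (-z i)) = Φ z := by
    rw [← habs, ← habs z]
    congr 1
    funext j
    rcases eq_or_ne j i with rfl | hj <;> simp [update_of_ne, *]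
  have hseg : c ∈ segment ℝ (z i) (-z i) := by
    rw [segment_eq_uIcc, Set.mem_uIcc]
    rcases abs_le.mp hc with ⟨h₁, h₂⟩
    rcases le_total 0 (z i) with hz | hz
    · rw [abs_of_nonneg hz] at h₁ h₂; right; constructor <;> linarith
    · rw [abs_of_nonpos hz] at h₁ h₂; left; constructor <;> linarith
  obtain ⟨a, b, ha, hb, hab, rfl⟩ := hseg
  have hcomb : update z i (a • z i + b • -z i) = a • z + b • update z i (-z i) := by
    funext j
    rcases eq_or_ne j i with rfl | hj
    · simp
    · simp only [update_of_ne hj, Pi.add_apply, Pi.smul_apply, smul_eq_mul, ← add_mul, hab,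
        one_mul]
  calc Φ (update z i (a • z i + b • -z i))
      ≤ a * Φ z + b * Φ (update z i (-z i)) := hcomb ▸ hΦ.map_smul_add_smul_le ha hb _ _
    _ = Φ z := by rw [hflip, ← add_mul, hab, one_mul]

theorem mono_abs [Fintype ι] (hΦ : IsNormOn Φ) (habs : ∀ x, Φ (fun i => |x i|) = Φ x)
    {x y : ι → ℝ} (hxy : ∀ i, |x i| ≤ |y i|) : Φ x ≤ Φ y := by
  classical
  suffices h : ∀ s : Finset ι, Φ (s.piecewise x y) ≤ Φ y by
    simpa using h Finset.univ
  intro s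
  induction s using Finset.induction_on with
  | empty => simp
  | insert a s ha ih =>
    rw [Finset.piecewise_insert]
    refine (hΦ.map_update_le habs _ a ?_).trans ih
    rw [Finset.piecewise_eq_of_notMem _ _ _ ha]
    exact hxy a

end Monotone

end IsNormOn

namespace AbsSymmNorm

variable {n : ℕ} {Φ : (Fin n → ℝ) → ℝ}

theorem map_abs (hΦ : AbsSymmNorm Φ) (x : Fin n → ℝ) : Φ (fun i => |x i|) = Φ x :=
  hΦ.2 (Equiv.refl _) x

theorem mono (hΦ : AbsSymmNorm Φ) {x y : Fin n → ℝ} (hxy : ∀ i, |x i| ≤ |y i|) : Φ x ≤ Φ y :=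
  hΦ.1.mono_abs hΦ.map_abs hxy

end AbsSymmNorm

theorem sq_convex_comb_le_convex_comb_sq {α : ℝ} (h₀ : 0 ≤ α) (h₁ : α ≤ 1) (u v : ℝ) :
    (α * u + (1 - α) * v) ^ 2 ≤ α * u ^ 2 + (1 - α) * v ^ 2 := by
  have key : α * u ^ 2 + (1 - α) * v ^ 2 - (α * u + (1 - α) * v) ^ 2
      = α * (1 - α) * (u - v) ^ 2 := by ring
  nlinarith [mul_nonneg (mul_nonneg h₀ (sub_nonneg.mpr h₁)) (sq_nonneg (u - v))]

theorem AbsSymmNorm.sq_map_convex_comb_le {n : ℕ} {Φ : (Fin n → ℝ) → ℝ} (hΦ : AbsSymmNorm Φ)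
    (hQ : IsNormOn fun x : Fin n → ℝ => Φ (fun i => Real.sqrt |x i|) ^ 2)
    {u v w d : Fin n → ℝ} {α c : ℝ} (h₀ : 0 ≤ α) (h₁ : α ≤ 1) (hc : 0 ≤ c)
    (h : ∀ j, α * u j ^ 2 + (1 - α) * v j ^ 2 ≤ w j ^ 2 + c * d j ^ 2) :
    Φ (α • u + (1 - α) • v) ^ 2 ≤ Φ w ^ 2 + c * Φ d ^ 2 := by
  set g : (Fin n → ℝ) → ℝ := fun x => Φ (fun i => Real.sqrt |x i|) ^ 2 with hg
  have g_sq : ∀ x : Fin n → ℝ, g (fun j => x j ^ 2) = Φ x ^ 2 := fun x => by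
    simp only [hg, abs_sq, Real.sqrt_sq_eq_abs, hΦ.map_abs]
  have g_mono : ∀ x y : Fin n → ℝ, (∀ j, |x j| ≤ |y j|) → g x ≤ g y := fun x y hxy => by
    refine pow_le_pow_left₀ (hΦ.1.1 _) (hΦ.mono fun j => ?_) 2
    simp only [abs_of_nonneg (Real.sqrt_nonneg _)]
    exact Real.sqrt_le_sqrt (hxy j)
  have hp : ∀ j, 0 ≤ α * u j ^ 2 + (1 - α) * v j ^ 2 := fun j => by
    have := sub_nonneg.mpr h₁
    positivity
  calc Φ (α • u + (1 - α) • v) ^ 2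
      = g (fun j => (α * u j + (1 - α) * v j) ^ 2) := (g_sq _).symm
    _ ≤ g (fun j => α * u j ^ 2 + (1 - α) * v j ^ 2) := g_mono _ _ fun j => by
        rw [abs_of_nonneg (sq_nonneg _), abs_of_nonneg (hp j)]
        exact sq_convex_comb_le_convex_comb_sq h₀ h₁ _ _
    _ ≤ g ((fun j => w j ^ 2) + c • fun j => d j ^ 2) := g_mono _ _ fun j => by
        rw [abs_of_nonneg (hp j)]
        exact (h j).trans (le_abs_self _)
    _ ≤ g (fun j => w j ^ 2) + g (c • fun j => d j ^ 2) := hQ.2.2.2 _ _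
    _ = Φ w ^ 2 + c * Φ d ^ 2 := by rw [hQ.map_smul_of_nonneg hc, g_sq, g_sq]

def IsSqSmooth {V : Type*} [AddCommGroup V] [Module ℝ V] (N : V → ℝ) (σ : ℝ) : Prop :=
  ∀ (x y : V) (α : ℝ), 0 ≤ α → α ≤ 1 →
    α * N x ^ 2 + (1 - α) * N y ^ 2 - σ / 2 * α * (1 - α) * N (x - y) ^ 2
      ≤ N (α • x + (1 - α) • y) ^ 2

theorem IsSqSmooth.eq_zero_of_neg {V : Type*} [AddCommGroup V] [Module ℝ V] {N : V → ℝ}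
    {σ : ℝ} (hN : IsNormOn N) (hs : IsSqSmooth N σ) (hσ : σ < 0) (x : V) : N x = 0 := by
  have h := hs x (-x) (1 / 2) (by norm_num) (by norm_num)
  have hmid : (1 / 2 : ℝ) • x + (1 - 1 / 2 : ℝ) • -x = 0 := by module
  have hdiff : x - -x = (2 : ℝ) • x := by module
  rw [hmid, hdiff, hN.map_zero, hN.map_neg, hN.map_smul_of_nonneg zero_le_two] at h
  nlinarith [hN.1 x]

/-- Group-norm smoothness: if `Ψ, Φ` are absolutely symmetric norms, `Φ²∘√` is a norm
(`Φ` is a Q-norm), `Ψ²` is `σ₁`-smooth w.r.t. `Ψ` and `Φ²` is `σ₂`-smooth w.r.t. `Φ`, then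
the square of the group norm `‖X‖_{Ψ,Φ} = Φ(Ψ(X¹),…,Ψ(Xⁿ))` (applied to the columns of `X`)
is `(σ₁+σ₂)`-smooth w.r.t. `‖·‖_{Ψ,Φ}`. -/
theorem stmt9 (m n : ℕ) (Ψ : (Fin m → ℝ) → ℝ) (Φ : (Fin n → ℝ) → ℝ)
    (hΨ : AbsSymmNorm Ψ) (hΦ : AbsSymmNorm Φ)
    (hQ : IsNormOn fun x : Fin n → ℝ => Φ (fun i => Real.sqrt |x i|) ^ 2)
    (σ₁ σ₂ : ℝ)
    (hΨs : ∀ (x y : Fin m → ℝ) (α : ℝ), 0 ≤ α → α ≤ 1 →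
      α * Ψ x ^ 2 + (1 - α) * Ψ y ^ 2 - σ₁ / 2 * α * (1 - α) * Ψ (x - y) ^ 2
        ≤ Ψ (α • x + (1 - α) • y) ^ 2)
    (hΦs : ∀ (x y : Fin n → ℝ) (α : ℝ), 0 ≤ α → α ≤ 1 →
      α * Φ x ^ 2 + (1 - α) * Φ y ^ 2 - σ₂ / 2 * α * (1 - α) * Φ (x - y) ^ 2
        ≤ Φ (α • x + (1 - α) • y) ^ 2) :
    ∀ (A B : Matrix (Fin m) (Fin n) ℝ) (α : ℝ), 0 ≤ α → α ≤ 1 →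
      α * Φ (fun j => Ψ (fun i => A i j)) ^ 2 + (1 - α) * Φ (fun j => Ψ (fun i => B i j)) ^ 2
        - (σ₁ + σ₂) / 2 * α * (1 - α) * Φ (fun j => Ψ (fun i => A i j - B i j)) ^ 2
      ≤ Φ (fun j => Ψ (fun i => (α • A + (1 - α) • B) i j)) ^ 2 := by
  intro A B α h₀ h₁
  rcases lt_or_ge σ₁ 0 with hσ₁ | hσ₁
  · have hΨ0 := IsSqSmooth.eq_zero_of_neg hΨ.1 hΨs hσ₁
    simp [hΨ0, show Φ (fun _ => 0) = 0 from hΦ.1.map_zero]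
  rcases lt_or_ge σ₂ 0 with hσ₂ | hσ₂
  · simp [IsSqSmooth.eq_zero_of_neg hΦ.1 hΦs hσ₂]
  set u : Fin n → ℝ := fun j => Ψ (fun i => A i j)
  set v : Fin n → ℝ := fun j => Ψ (fun i => B i j)
  set d : Fin n → ℝ := fun j => Ψ (fun i => A i j - B i j)
  set w : Fin n → ℝ := fun j => Ψ (fun i => (α • A + (1 - α) • B) i j)
  have hcol : ∀ j, α * u j ^ 2 + (1 - α) * v j ^ 2 ≤ w j ^ 2 + σ₁ / 2 * α * (1 - α) * d j ^ 2 :=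
    fun j => sub_le_iff_le_add.mp (hΨs (fun i => A i j) (fun i => B i j) α h₀ h₁)
  have hcomb := hΦ.sq_map_convex_comb_le hQ h₀ h₁ (by positivity [sub_nonneg.mpr h₁]) hcol
  have hdiff : Φ (u - v) ≤ Φ d := hΦ.mono fun j => by
    rw [abs_of_nonneg (hΨ.1.1 _)]
    exact hΨ.1.abs_map_sub_map_le _ _
  have hdiff_sq : σ₂ / 2 * α * (1 - α) * Φ (u - v) ^ 2 ≤ σ₂ / 2 * α * (1 - α) * Φ d ^ 2 := by
    have := sub_nonneg.mpr h₁
    gcongr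
    exact hΦ.1.1 _
  linarith [hΦs u v α h₀ h₁]
end
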